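/- arXiv:2412.12724 — 5 statements merged into one kernel-verified Lean document; each statement's English description precedes it below -/
import Mathlib

section
/- Let K be a positive integer, ω₀ > 0, T = 2π/ω₀, λ > 0, and let q : ℝ → ℝ be a nonconstant real-valued trigonometric polynomial of order K, i.e., q(t) = Σ_{k=−K}^{K} c_k e^{i k ω₀ t} real-valued. Let A = sup_{t ∈ [0,T)} |q(t)| and assume A ≥ λ. Then the set of level-crossing instants {t ∈ [0, T) : ∃ m ∈ ℤ, q(t) = (2m + 1)λ} is finite and has cardinality at most 4K + 4K·⌊(A − λ)/(2λ)⌋. -/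
open Polynomial in
lemma trig_injOn (ω₀ : ℝ) (hω₀ : 0 < ω₀) :
    Set.InjOn (fun t : ℝ => Complex.exp (Complex.I * (ω₀ : ℂ) * (t : ℂ)))
      (Set.Ico (0 : ℝ) (2 * Real.pi / ω₀)) := by
  intro s hs t ht h
  simp only at h
  rw [Complex.exp_eq_exp_iff_exists_int] at h
  obtain ⟨n, hn⟩ := h
  have hI : (Complex.I * ω₀ * s) = Complex.I * (ω₀ * s) := by ring
  have h2 : Complex.I * (ω₀ * s) = Complex.I * ((ω₀ * t) + n * (2 * Real.pi)) := by
    rw [← hI, hn]; ring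
  have h4 : ω₀ * s = ω₀ * t + n * (2 * Real.pi) := by
    exact_mod_cast mul_left_cancel₀ Complex.I_ne_zero h2
  have hpi := Real.pi_pos
  obtain ⟨hs0, hs1⟩ := hs
  obtain ⟨ht0, ht1⟩ := ht
  have hs2 : ω₀ * s < 2 * Real.pi := by
    have h := (lt_div_iff₀ hω₀).mp hs1; nlinarith
  have ht2 : ω₀ * t < 2 * Real.pi := by
    have h := (lt_div_iff₀ hω₀).mp ht1; nlinarith
  have hs3 : 0 ≤ ω₀ * s := mul_nonneg hω₀.le hs0
  have ht3 : 0 ≤ ω₀ * t := mul_nonneg hω₀.le ht0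
  have hn0 : n = 0 := by
    by_contra hne
    rcases lt_or_gt_of_ne hne with h | h
    · have : (n : ℝ) ≤ -1 := by exact_mod_cast (by omega : n ≤ -1)
      nlinarith
    · have : (1 : ℝ) ≤ n := by exact_mod_cast h
      nlinarith
  have h5 : ω₀ * s = ω₀ * t := by rw [hn0] at h4; push_cast at h4; linarith
  exact mul_left_cancel₀ (ne_of_gt hω₀) h5

open Polynomial in
lemma trig_level_bound (K : ℕ) (hK : 0 < K) (ω₀ : ℝ) (hω₀ : 0 < ω₀)
    (q : ℝ → ℝ) (c : ℤ → ℂ)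
    (hq : ∀ t : ℝ, (q t : ℂ) =
      ∑ k ∈ Finset.Icc (-(K : ℤ)) (K : ℤ),
        c k * Complex.exp (Complex.I * (k : ℂ) * (ω₀ : ℂ) * (t : ℂ)))
    (hnc : ∃ t₁ t₂ : ℝ, q t₁ ≠ q t₂) (v : ℝ) :
    {t : ℝ | t ∈ Set.Ico (0:ℝ) (2*Real.pi/ω₀) ∧ q t = v}.Finite ∧
    {t : ℝ | t ∈ Set.Ico (0:ℝ) (2*Real.pi/ω₀) ∧ q t = v}.ncard ≤ 2*K := by
  set z : ℝ → ℂ := fun t => Complex.exp (Complex.I * (ω₀ : ℂ) * (t : ℂ)) with hzdef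
  have hz0 : ∀ t, z t ≠ 0 := fun t => Complex.exp_ne_zero _
  set P : Polynomial ℂ :=
    (∑ k ∈ Finset.Icc (-(K : ℤ)) (K : ℤ), C (c k) * X ^ (k + K).toNat)
      - C (v : ℂ) * X ^ K with hPdef
  -- evaluation identity
  have heval : ∀ t : ℝ, P.eval (z t) = ((q t : ℂ) - v) * (z t) ^ K := by
    intro t
    have hterm : ∀ k ∈ Finset.Icc (-(K : ℤ)) (K : ℤ),
        (z t) ^ (k + K).toNat
          = Complex.exp (Complex.I * (k : ℂ) * (ω₀ : ℂ) * (t : ℂ)) * (z t) ^ K := by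
      intro k hk
      have hk1 : -(K : ℤ) ≤ k := (Finset.mem_Icc.mp hk).1
      have hk' : (0 : ℤ) ≤ k + K := by omega
      have e1 : (z t) ^ (k + K).toNat = (z t) ^ ((k + K : ℤ)) := by
        rw [← zpow_natCast, Int.toNat_of_nonneg hk']
      have e2 : (z t) ^ ((k + K : ℤ)) = (z t) ^ (k : ℤ) * (z t) ^ ((K : ℕ) : ℤ) :=
        zpow_add₀ (hz0 t) _ _
      have e3 : (z t) ^ (k : ℤ) = Complex.exp (Complex.I * (k : ℂ) * (ω₀ : ℂ) * (t : ℂ)) := by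
        rw [hzdef]
        rw [← Complex.exp_int_mul]
        ring_nf
      rw [e1, e2, e3, zpow_natCast]
    rw [hPdef]
    simp only [eval_sub, eval_finset_sum, eval_mul, eval_C, eval_pow, eval_X]
    rw [Finset.sum_congr rfl (fun k hk => by rw [hterm k hk])]
    have : ∑ k ∈ Finset.Icc (-(K : ℤ)) (K : ℤ),
        c k * (Complex.exp (Complex.I * (k : ℂ) * (ω₀ : ℂ) * (t : ℂ)) * (z t) ^ K)
        = (∑ k ∈ Finset.Icc (-(K : ℤ)) (K : ℤ),
            c k * Complex.exp (Complex.I * (k : ℂ) * (ω₀ : ℂ) * (t : ℂ))) * (z t) ^ K := by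
      rw [Finset.sum_mul]; exact Finset.sum_congr rfl (fun k _ => by ring)
    rw [this, ← hq t]
    ring
  -- P ≠ 0
  have hP0 : P ≠ 0 := by
    intro h
    obtain ⟨t₁, t₂, hne⟩ := hnc
    have h1 : ∀ t : ℝ, q t = v := by
      intro t
      have := heval t
      rw [h, eval_zero] at this
      have hz' : (z t) ^ K ≠ 0 := pow_ne_zero _ (hz0 t)
      have : ((q t : ℂ) - v) = 0 := by
        rcases mul_eq_zero.mp this.symm with h' | h'
        · exact h'
        · exact absurd h' hz'
      have : ((q t : ℂ)) = (v : ℂ) := by linear_combination this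
      exact_mod_cast this
    exact hne (by rw [h1 t₁, h1 t₂])
  -- degree bound
  have hdeg : P.natDegree ≤ 2 * K := by
    rw [hPdef]
    apply le_trans (Polynomial.natDegree_sub_le _ _)
    apply max_le
    · apply Polynomial.natDegree_sum_le_of_forall_le
      intro k hk
      have hk2 : k ≤ (K : ℤ) := (Finset.mem_Icc.mp hk).2
      apply le_trans (Polynomial.natDegree_C_mul_le _ _)
      rw [Polynomial.natDegree_X_pow]
      omega
    · apply le_trans (Polynomial.natDegree_C_mul_le _ _)
      rw [Polynomial.natDegree_X_pow]
      omega
  -- roots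
  set R : Finset ℂ := P.roots.toFinset with hR
  have hRcard : R.card ≤ 2 * K :=
    le_trans (Multiset.toFinset_card_le _) (le_trans (Polynomial.card_roots' P) hdeg)
  set S := {t : ℝ | t ∈ Set.Ico (0:ℝ) (2*Real.pi/ω₀) ∧ q t = v} with hS
  have hinj : Set.InjOn z S := (trig_injOn ω₀ hω₀).mono (fun t ht => ht.1)
  have himg : z '' S ⊆ ↑R := by
    rintro x ⟨t, ht, rfl⟩
    rw [hR, Finset.mem_coe, Multiset.mem_toFinset, Polynomial.mem_roots hP0]
    have : P.eval (z t) = 0 := by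
      rw [heval t, ht.2]
      simp
    exact this
  have hfin : S.Finite :=
    Set.Finite.of_finite_image (Set.Finite.subset (R.finite_toSet) himg) hinj
  refine ⟨hfin, ?_⟩
  calc S.ncard = (z '' S).ncard := (Set.ncard_image_of_injOn hinj).symm
  _ ≤ (↑R : Set ℂ).ncard := Set.ncard_le_ncard himg (R.finite_toSet)
  _ = R.card := Set.ncard_coe_finset R
  _ ≤ 2 * K := hRcard

/-- A nonconstant real-valued trigonometric polynomial of order `K` with period
`T = 2π/ω₀` and sup-norm `A = sup_{t ∈ [0,T)} |q(t)| ≥ λ` crosses the folding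
levels `(2m+1)λ`, `m ∈ ℤ`, at most `4K + 4K⌊(A − λ)/(2λ)⌋` times in `[0, T)`. -/
theorem stmt_4 (K : ℕ) (hK : 0 < K) (ω₀ : ℝ) (hω₀ : 0 < ω₀) (lam : ℝ)
    (hlam : 0 < lam) (q : ℝ → ℝ) (c : ℤ → ℂ)
    (hq : ∀ t : ℝ, (q t : ℂ) =
      ∑ k ∈ Finset.Icc (-(K : ℤ)) (K : ℤ),
        c k * Complex.exp (Complex.I * (k : ℂ) * (ω₀ : ℂ) * (t : ℂ)))
    (hnc : ∃ t₁ t₂ : ℝ, q t₁ ≠ q t₂) (A : ℝ)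
    (hA : A = sSup ((fun t : ℝ => |q t|) '' Set.Ico (0 : ℝ) (2 * Real.pi / ω₀)))
    (hAlam : lam ≤ A) :
    ({t : ℝ | t ∈ Set.Ico (0 : ℝ) (2 * Real.pi / ω₀) ∧
        ∃ m : ℤ, q t = (2 * (m : ℝ) + 1) * lam}).Finite ∧
      (({t : ℝ | t ∈ Set.Ico (0 : ℝ) (2 * Real.pi / ω₀) ∧
          ∃ m : ℤ, q t = (2 * (m : ℝ) + 1) * lam}).ncard : ℤ) ≤
        4 * K + 4 * K * ⌊(A - lam) / (2 * lam)⌋ := by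
  -- continuity of q
  have hqc : Continuous q := by
    have hg : Continuous fun t : ℝ =>
        ∑ k ∈ Finset.Icc (-(K : ℤ)) (K : ℤ),
          c k * Complex.exp (Complex.I * (k : ℂ) * (ω₀ : ℂ) * (t : ℂ)) := by
      apply continuous_finset_sum
      intro k _
      exact continuous_const.mul (Complex.continuous_exp.comp (by continuity))
    have : q = fun t : ℝ => (∑ k ∈ Finset.Icc (-(K : ℤ)) (K : ℤ),
        c k * Complex.exp (Complex.I * (k : ℂ) * (ω₀ : ℂ) * (t : ℂ))).re := by
      funext t
      rw [← hq t, Complex.ofReal_re]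
    rw [this]
    exact Complex.continuous_re.comp hg
  -- bound |q t| ≤ A on the interval
  have hbdd : BddAbove ((fun t : ℝ => |q t|) '' Set.Ico (0 : ℝ) (2 * Real.pi / ω₀)) := by
    apply BddAbove.mono (Set.image_mono Set.Ico_subset_Icc_self)
    exact (isCompact_Icc).bddAbove_image (hqc.abs.continuousOn)
  have hqA : ∀ t ∈ Set.Ico (0 : ℝ) (2 * Real.pi / ω₀), |q t| ≤ A := by
    intro t ht
    rw [hA]
    exact le_csSup hbdd ⟨t, ht, rfl⟩
  set N : ℤ := ⌊(A - lam) / (2 * lam)⌋ with hN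
  have hN0 : 0 ≤ N := by
    rw [hN]
    exact Int.floor_nonneg.mpr (div_nonneg (by linarith) (by positivity))
  set L : Finset ℤ := Finset.Icc (-(N + 1)) N with hL
  have hsub : ∀ t ∈ Set.Ico (0 : ℝ) (2 * Real.pi / ω₀), ∀ m : ℤ,
      q t = (2 * (m : ℝ) + 1) * lam → m ∈ L := by
    intro t ht m hm
    have h1 : |q t| ≤ A := hqA t ht
    have h2 : (2 * (m : ℝ) + 1) * lam ≤ A := by
      rw [← hm]; exact (abs_le.mp h1).2
    have h3 : -A ≤ (2 * (m : ℝ) + 1) * lam := by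
      rw [← hm]; exact (abs_le.mp h1).1
    rw [hL, Finset.mem_Icc]
    constructor
    · have : (-(m : ℝ) - 1) ≤ (A - lam) / (2 * lam) := by
        rw [le_div_iff₀ (by positivity)]
        nlinarith
      have h4 : (-m - 1 : ℤ) ≤ N := Int.le_floor.mpr (by push_cast; linarith)
      omega
    · have : (m : ℝ) ≤ (A - lam) / (2 * lam) := by
        rw [le_div_iff₀ (by positivity)]
        nlinarith
      exact Int.le_floor.mpr this
  -- per-level finite sets
  have hlev := fun m : ℤ =>
    trig_level_bound K hK ω₀ hω₀ q c hq hnc ((2 * (m : ℝ) + 1) * lam)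
  set F : ℤ → Finset ℝ := fun m => (hlev m).1.toFinset with hF
  set S := {t : ℝ | t ∈ Set.Ico (0 : ℝ) (2 * Real.pi / ω₀) ∧
      ∃ m : ℤ, q t = (2 * (m : ℝ) + 1) * lam} with hS
  have hSsub : S ⊆ ↑(L.biUnion F) := by
    rintro t ⟨ht, m, hm⟩
    rw [Finset.coe_biUnion]
    refine Set.mem_biUnion (hsub t ht m hm) ?_
    rw [hF]
    simp only [Set.Finite.coe_toFinset]
    exact ⟨ht, hm⟩
  have hfin : S.Finite := Set.Finite.subset (L.biUnion F).finite_toSet hSsub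
  refine ⟨hfin, ?_⟩
  have hcard1 : S.ncard ≤ (L.biUnion F).card := by
    calc S.ncard ≤ (↑(L.biUnion F) : Set ℝ).ncard :=
      Set.ncard_le_ncard hSsub (L.biUnion F).finite_toSet
    _ = (L.biUnion F).card := Set.ncard_coe_finset _
  have hcard2 : (L.biUnion F).card ≤ L.card * (2 * K) := by
    apply le_trans (Finset.card_biUnion_le)
    calc ∑ m ∈ L, (F m).card ≤ L.card • (2 * K) := by
          apply Finset.sum_le_card_nsmul
          intro m _
          rw [hF]
          simp only
          rw [← Set.ncard_coe_finset, Set.Finite.coe_toFinset]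
          exact (hlev m).2
    _ = L.card * (2 * K) := by rw [smul_eq_mul]
  have hLcard : (L.card : ℤ) = 2 * N + 2 := by
    rw [hL, Int.card_Icc]
    rw [Int.toNat_of_nonneg (by omega)]
    omega
  have : (S.ncard : ℤ) ≤ (L.card : ℤ) * (2 * K) := by
    exact_mod_cast le_trans hcard1 hcard2
  rw [hLcard] at this
  have he : (2 * N + 2) * (2 * (K : ℤ)) = 4 * K + 4 * K * N := by ring
  linarith [this, he.le]
end

section
/- Let λ > 0 and let f : ℝ → ℝ be continuous. Define the residual z(t) := M_λ(f(t)) − f(t). If a < b are real numbers with z(a) ≠ z(b), then there exist t ∈ [a, b] and m ∈ ℤ such that f(t) = (2m + 1)λ. In other words, every jump of the piecewise-constant residual is accompanied by a crossing of a folding level (2ℤ+1)λ by f. -/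
/-- The centered modulo operator `M_λ(x) = ((x + λ) mod 2λ) − λ`, where
`(· mod 2λ)` is the remainder in `[0, 2λ)`. -/
noncomputable def moduloFold (lam x : ℝ) : ℝ :=
  ((x + lam) - 2 * lam * ⌊(x + lam) / (2 * lam)⌋) - lam

/-- Every jump of the residual `z(t) = M_λ(f(t)) − f(t)` of a continuous
function `f` is accompanied by a crossing of a folding level `(2m+1)λ` of `f`:
if `z(a) ≠ z(b)` for `a < b`, then `f(t) = (2m+1)λ` for some `t ∈ [a, b]` and
some `m ∈ ℤ`. -/
theorem stmt_5 (lam : ℝ) (hlam : 0 < lam) (f : ℝ → ℝ) (hf : Continuous f)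
    (a b : ℝ) (hab : a < b)
    (hz : moduloFold lam (f a) - f a ≠ moduloFold lam (f b) - f b) :
    ∃ t ∈ Set.Icc a b, ∃ m : ℤ, f t = (2 * (m : ℝ) + 1) * lam := by
  set g : ℝ → ℝ := fun t => (f t + lam) / (2 * lam) with hg
  have hgc : Continuous g := by
    continuity
  have h2l : (2 * lam) ≠ 0 := by positivity
  have hne : ⌊g a⌋ ≠ ⌊g b⌋ := by
    intro h
    apply hz
    simp only [moduloFold, show ⌊(f a + lam) / (2 * lam)⌋ = ⌊(f b + lam) / (2 * lam)⌋ from h]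
    ring
  -- key: find t with g t an integer
  have key : ∀ n : ℤ, ∀ t ∈ Set.Icc a b, g t = n →
      ∃ t ∈ Set.Icc a b, ∃ m : ℤ, f t = (2 * (m : ℝ) + 1) * lam := by
    intro n t ht hgt
    refine ⟨t, ht, n - 1, ?_⟩
    have : f t + lam = (2 * lam) * n := by
      have hgt' : (f t + lam) / (2 * lam) = n := hgt
      rw [div_eq_iff h2l] at hgt'
      linarith [hgt']
    push_cast
    linarith
  rcases lt_or_gt_of_ne hne with h | h
  · have h1 : (((⌊g a⌋ : ℤ) + 1 : ℤ) : ℝ) ∈ Set.Icc (g a) (g b) := by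
      constructor
      · push_cast; linarith [Int.lt_floor_add_one (g a)]
      · push_cast
        have : ((⌊g a⌋ : ℤ) + 1 : ℝ) ≤ (⌊g b⌋ : ℝ) := by exact_mod_cast h
        linarith [Int.floor_le (g b)]
    obtain ⟨t, ht, hgt⟩ := intermediate_value_Icc hab.le hgc.continuousOn h1
    exact key _ t ht hgt
  · have h1 : (((⌊g b⌋ : ℤ) + 1 : ℤ) : ℝ) ∈ Set.Icc (g b) (g a) := by
      constructor
      · push_cast; linarith [Int.lt_floor_add_one (g b)]
      · push_cast
        have : ((⌊g b⌋ : ℤ) + 1 : ℝ) ≤ (⌊g a⌋ : ℝ) := by exact_mod_cast h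
        linarith [Int.floor_le (g a)]
    obtain ⟨t, ht, hgt⟩ := intermediate_value_Icc' hab.le hgc.continuousOn h1
    exact key _ t ht hgt
end

section
/- Let K and N be positive integers, T_s > 0, T = N·T_s, ω₀ = 2π/T, λ > 0, and let q : ℝ → ℝ be a nonconstant real-valued trigonometric polynomial of order K, i.e., q(t) = Σ_{k=−K}^{K} c_k e^{i k ω₀ t} real-valued, with A = sup_{t ∈ [0,T)} |q(t)| ≥ λ. Assume the samples are non-degenerate, i.e., q(n·T_s) ≠ (2m+1)λ for every n ∈ {0,…,N−1} and every m ∈ ℤ. Define the residual samples z(n) = M_λ(q(n·T_s)) − q(n·T_s) for n ∈ {0,…,N−1}, set z(−1) := z(0), and let L be the number of indices n ∈ {0, 1, …, N−1} with z(n) ≠ z(n−1). Then L ≤ min(4K + 4K·⌊(A − λ)/(2λ)⌋, N). -/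
open Polynomial in
lemma zeros_bound (K : ℕ) (T ω : ℝ) (hT : 0 < T) (hωT : ω * T = 2 * Real.pi)
    (q : ℝ → ℝ) (c : ℤ → ℂ)
    (hq : ∀ t : ℝ, (q t : ℂ) =
      ∑ k ∈ Finset.Icc (-(K : ℤ)) (K : ℤ),
        c k * Complex.exp (Complex.I * (k : ℂ) * (ω : ℂ) * (t : ℂ)))
    (hnc : ∃ t₁ t₂ : ℝ, q t₁ ≠ q t₂) (l : ℝ) :
    ∃ Z : Finset ℝ, Z.card ≤ 2 * K ∧ ∀ t, 0 ≤ t → t < T → q t = l → t ∈ Z := by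
  have hω : 0 < ω := by
    have := Real.pi_pos
    nlinarith
  set P : ℂ[X] := (∑ j ∈ Finset.range (2 * K + 1), C (c ((j : ℤ) - K)) * X ^ j)
      - C (l : ℂ) * X ^ K with hP
  -- evaluation identity
  have heval : ∀ t : ℝ, P.eval (Complex.exp (Complex.I * ω * t))
      = ((q t : ℂ) - l) * Complex.exp (Complex.I * K * ω * t) := by
    intro t
    have key : ∑ k ∈ Finset.Icc (-(K : ℤ)) (K : ℤ),
        c k * Complex.exp (Complex.I * (k : ℂ) * (ω : ℂ) * (t : ℂ))
          * Complex.exp (Complex.I * K * ω * t)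
        = ∑ j ∈ Finset.range (2 * K + 1),
            c ((j : ℤ) - K) * Complex.exp (Complex.I * ω * t) ^ j := by
      refine Finset.sum_nbij' (fun k => (k + K).toNat) (fun j => (j : ℤ) - K) ?_ ?_ ?_ ?_ ?_
      · intro k hk
        simp only [Finset.mem_Icc] at hk
        simp only [Finset.mem_range]
        omega
      · intro j hj
        simp only [Finset.mem_range] at hj
        simp only [Finset.mem_Icc]
        omega
      · intro k hk
        simp only [Finset.mem_Icc] at hk
        show (((k + K).toNat : ℤ)) - K = k
        omega
      · intro j hj
        simp only [Finset.mem_range] at hj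
        show ((j : ℤ) - K + K).toNat = j
        omega
      · intro k hk
        simp only [Finset.mem_Icc] at hk
        have h1 : ((((k + K).toNat : ℤ)) : ℤ) = k + K := by omega
        rw [h1]
        have h2 : Complex.exp (Complex.I * ω * t) ^ (k + K).toNat
            = Complex.exp (((k + K).toNat : ℂ) * (Complex.I * ω * t)) := by
          rw [← Complex.exp_nat_mul]
        have h3 : (((k + K).toNat : ℕ) : ℂ) = (k : ℂ) + (K : ℂ) := by
          exact_mod_cast congrArg (Int.cast : ℤ → ℂ) h1
        rw [h2, h3, show k + (K:ℤ) - K = k from by ring, mul_assoc, ← Complex.exp_add]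
        congr 1
        ring
    simp only [hP, eval_sub, eval_mul, eval_pow, eval_C, eval_X, eval_finset_sum]
    rw [hq t, sub_mul, Finset.sum_mul, key]
    congr 1
    rw [← Complex.exp_nat_mul]
    ring_nf
  -- P ≠ 0
  have hPne : P ≠ 0 := by
    intro h0
    obtain ⟨t₁, t₂, hne⟩ := hnc
    have hconst : ∀ t : ℝ, q t = l := by
      intro t
      have := heval t
      rw [h0] at this
      simp only [eval_zero] at this
      have hexp : Complex.exp (Complex.I * K * ω * t) ≠ 0 := Complex.exp_ne_zero _
      have : (q t : ℂ) - l = 0 := by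
        rcases mul_eq_zero.mp this.symm with h | h
        · exact h
        · exact absurd h hexp
      have : (q t : ℂ) = (l : ℂ) := by linear_combination this
      exact_mod_cast this
    exact hne (by rw [hconst t₁, hconst t₂])
  have hdeg : P.natDegree ≤ 2 * K := by
    apply le_trans (natDegree_sub_le _ _)
    apply max_le
    · apply Polynomial.natDegree_sum_le_of_forall_le
      intro j hj
      simp only [Finset.mem_range] at hj
      calc (C (c ((j:ℤ) - K)) * X ^ j).natDegree ≤ _ := natDegree_mul_le
        _ ≤ 2 * K := by simp [natDegree_C, natDegree_X_pow]; omega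
    · calc (C (l : ℂ) * X ^ K).natDegree ≤ _ := natDegree_mul_le
        _ ≤ 2 * K := by simp [natDegree_C, natDegree_X_pow]; omega
  set R : Finset ℂ := P.roots.toFinset with hR
  have hRcard : R.card ≤ 2 * K := by
    calc R.card ≤ Multiset.card P.roots := P.roots.toFinset_card_le
      _ ≤ P.natDegree := P.card_roots'
      _ ≤ 2 * K := hdeg
  set s : Set ℝ := {t | (0 ≤ t ∧ t < T) ∧ q t = l} with hs
  have hmaps : ∀ t ∈ s, Complex.exp (Complex.I * ω * t) ∈ (R : Set ℂ) := by
    intro t ht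
    obtain ⟨⟨_, _⟩, hqt⟩ := ht
    have : P.eval (Complex.exp (Complex.I * ω * t)) = 0 := by
      rw [heval t, hqt]; simp
    simp only [hR, Finset.coe_sort_coe, Multiset.mem_toFinset, Finset.mem_coe]
    rw [Polynomial.mem_roots hPne]
    exact this
  have hinj : Set.InjOn (fun t : ℝ => Complex.exp (Complex.I * ω * t)) s := by
    intro t₁ ht₁ t₂ ht₂ h
    simp only at h
    rw [Complex.exp_eq_exp_iff_exists_int] at h
    obtain ⟨n, hn⟩ := h
    have hI : Complex.I ≠ 0 := Complex.I_ne_zero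
    have hn' : (ω : ℂ) * t₁ = ω * t₂ + n * (2 * Real.pi) := by
      have : Complex.I * (ω * t₁) = Complex.I * (ω * t₂ + n * (2 * Real.pi)) := by
        rw [mul_add]
        calc Complex.I * (ω * t₁) = Complex.I * ω * t₁ := by ring
          _ = Complex.I * ω * t₂ + n * (2 * Real.pi * Complex.I) := hn
          _ = Complex.I * (ω * t₂) + Complex.I * (n * (2 * Real.pi)) := by ring
      exact mul_left_cancel₀ hI this
    have hreal : ω * t₁ = ω * t₂ + n * (2 * Real.pi) := by
      exact_mod_cast hn'
    rw [← hωT] at hreal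
    have hd : t₁ - t₂ = n * T := by
      have hcc : ω * (t₁ - t₂) = ω * ((n : ℝ) * T) := by linear_combination hreal
      exact mul_left_cancel₀ (ne_of_gt hω) hcc
    obtain ⟨⟨h1, h2⟩, _⟩ := ht₁
    obtain ⟨⟨h3, h4⟩, _⟩ := ht₂
    have : n = 0 := by
      by_contra hn0
      have h1n : (1 : ℝ) ≤ |(n : ℝ)| := by
        have : (1 : ℤ) ≤ |n| := Int.one_le_abs (by omega)
        calc (1:ℝ) ≤ (|n| : ℤ) := by exact_mod_cast this
          _ = |(n : ℝ)| := by push_cast; ring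
      have : T ≤ |t₁ - t₂| := by
        rw [hd, abs_mul, abs_of_pos hT]
        nlinarith
      have : |t₁ - t₂| < T := abs_sub_lt_of_nonneg_of_lt h1 h2 h3 h4
      linarith
    rw [this] at hd
    push_cast at hd
    linarith
  have hfin : s.Finite := by
    apply Set.Finite.of_finite_image _ hinj
    exact (R.finite_toSet).subset (Set.image_subset_iff.mpr hmaps)
  refine ⟨hfin.toFinset, ?_, ?_⟩
  · refine le_trans (Finset.card_le_card_of_injOn
      (fun t : ℝ => Complex.exp (Complex.I * ω * t)) ?_ ?_) hRcard
    · intro t ht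
      rw [Finset.mem_coe, Set.Finite.mem_toFinset] at ht
      exact hmaps t ht
    · intro a ha b hb hab
      simp only [Finset.mem_coe, Set.Finite.mem_toFinset] at ha hb
      exact hinj ha hb hab
  · intro t h1 h2 h3
    rw [Set.Finite.mem_toFinset]
    exact ⟨⟨h1, h2⟩, h3⟩


set_option maxHeartbeats 1000000 in
/-- Theorem 1 of the paper (periodized trigonometric-polynomial model): for a
nonconstant real trigonometric polynomial `q` of order `K` with period
`T = N·T_s`, sup-norm `A ≥ λ`, whose samples never hit a folding level, the
number `L` of nonzero entries of the first-order difference of the residual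
samples `z(n) = M_λ(q(nT_s)) − q(nT_s)` (with `z(−1) := z(0)`) satisfies
`L ≤ min(4K + 4K⌊(A − λ)/(2λ)⌋, N)`. -/
theorem stmt_6 (K N : ℕ) (hK : 0 < K) (hN : 0 < N) (Ts : ℝ) (hTs : 0 < Ts)
    (T ω₀ lam : ℝ) (hT : T = N * Ts) (hω₀ : ω₀ = 2 * Real.pi / T)
    (hlam : 0 < lam) (q : ℝ → ℝ) (c : ℤ → ℂ)
    (hq : ∀ t : ℝ, (q t : ℂ) =
      ∑ k ∈ Finset.Icc (-(K : ℤ)) (K : ℤ),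
        c k * Complex.exp (Complex.I * (k : ℂ) * (ω₀ : ℂ) * (t : ℂ)))
    (hnc : ∃ t₁ t₂ : ℝ, q t₁ ≠ q t₂) (A : ℝ)
    (hA : A = sSup ((fun t : ℝ => |q t|) '' Set.Ico (0 : ℝ) T))
    (hAlam : lam ≤ A)
    (hnd : ∀ n ∈ Finset.range N, ∀ m : ℤ, q (n * Ts) ≠ (2 * (m : ℝ) + 1) * lam)
    (z : ℕ → ℝ) (hz : ∀ n ∈ Finset.range N,
      z n = moduloFold lam (q (n * Ts)) - q (n * Ts))
    (L : ℕ)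
    (hL : L = ((Finset.range N).filter
      (fun n => z n ≠ if n = 0 then z 0 else z (n - 1))).card) :
    (L : ℤ) ≤ min (4 * K + 4 * K * ⌊(A - lam) / (2 * lam)⌋) (N : ℤ) := by
  classical
  set S := (Finset.range N).filter
      (fun n => z n ≠ if n = 0 then z 0 else z (n - 1)) with hS
  have hTpos : 0 < T := by
    rw [hT]
    positivity
  have hωT : ω₀ * T = 2 * Real.pi := by
    rw [hω₀]
    field_simp
  -- L ≤ N is easy
  have hLN : (L : ℤ) ≤ (N : ℤ) := by
    rw [hL, hS]
    exact_mod_cast le_trans (Finset.card_filter_le _ _) (le_of_eq (Finset.card_range N))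
  refine le_min ?_ hLN
  set M : ℤ := ⌊(A - lam) / (2 * lam)⌋ with hM
  have hM0 : 0 ≤ M := by
    apply Int.le_floor.mpr
    push_cast
    apply div_nonneg <;> linarith
  -- continuity of q
  have hqc : Continuous q := by
    have hg : Continuous (fun t : ℝ => ∑ k ∈ Finset.Icc (-(K : ℤ)) (K : ℤ),
        c k * Complex.exp (Complex.I * (k : ℂ) * (ω₀ : ℂ) * (t : ℂ))) := by
      apply continuous_finset_sum
      intro k _
      exact continuous_const.mul (Complex.continuous_exp.comp
        (continuous_const.mul Complex.continuous_ofReal))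
    have hqe : q = fun t : ℝ => (∑ k ∈ Finset.Icc (-(K : ℤ)) (K : ℤ),
        c k * Complex.exp (Complex.I * (k : ℂ) * (ω₀ : ℂ) * (t : ℂ))).re := by
      funext t
      rw [← hq t, Complex.ofReal_re]
    rw [hqe]
    exact Complex.continuous_re.comp hg
  -- boundedness
  have hbdd : BddAbove ((fun t : ℝ => |q t|) '' Set.Ico (0 : ℝ) T) := by
    have hcpt : IsCompact ((fun t : ℝ => |q t|) '' Set.Icc (0 : ℝ) T) :=
      isCompact_Icc.image (continuous_abs.comp hqc)
    exact BddAbove.mono (Set.image_mono Set.Ico_subset_Icc_self) hcpt.bddAbove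
  have hbound : ∀ s : ℝ, 0 ≤ s → s < T → |q s| ≤ A := by
    intro s h1 h2
    rw [hA]
    exact le_csSup hbdd ⟨s, ⟨h1, h2⟩, rfl⟩
  -- residual formula
  have hzf : ∀ n ∈ Finset.range N,
      z n = -(2 * lam * ⌊(q (n * Ts) + lam) / (2 * lam)⌋) := by
    intro n hn
    rw [hz n hn, moduloFold]
    ring
  -- zero finsets
  choose Z hZcard hZmem using fun m : ℤ =>
    zeros_bound K T ω₀ hTpos hωT q c hq hnc ((2 * (m : ℝ) + 1) * lam)
  -- crossing construction
  have key0 : ∀ n ∈ S, ∃ p : ℤ × ℝ,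
      p.1 ∈ Finset.Icc (-(M + 1)) M ∧ p.2 ∈ Z p.1 ∧
      ((n : ℝ) - 1) * Ts < p.2 ∧ p.2 < (n : ℝ) * Ts := by
    intro n hn
    rw [hS, Finset.mem_filter] at hn
    obtain ⟨hnN, hne⟩ := hn
    have hn0 : n ≠ 0 := by
      intro h
      rw [h] at hne
      simp at hne
    rw [if_neg hn0] at hne
    have hn1N : n - 1 ∈ Finset.range N := by
      rw [Finset.mem_range] at hnN ⊢
      omega
    have hcast : ((n - 1 : ℕ) : ℝ) = (n : ℝ) - 1 := by
      have : 1 ≤ n := Nat.one_le_iff_ne_zero.mpr hn0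
      push_cast [this]
      ring
    set a := q (((n : ℝ) - 1) * Ts) with ha
    set b := q ((n : ℝ) * Ts) with hb
    -- bins differ
    have hbin : ⌊(a + lam) / (2 * lam)⌋ ≠ ⌊(b + lam) / (2 * lam)⌋ := by
      intro h
      apply hne
      rw [hzf n hnN, hzf (n - 1) hn1N, hcast, ← ha, ← hb, h]
    -- bounds on a b
    have hlo0 : (0 : ℝ) ≤ ((n : ℝ) - 1) * Ts := by
      have : (1 : ℝ) ≤ (n : ℝ) := by exact_mod_cast Nat.one_le_iff_ne_zero.mpr hn0
      nlinarith
    have hhiT : (n : ℝ) * Ts < T := by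
      rw [hT]
      have : (n : ℝ) < N := by exact_mod_cast Finset.mem_range.mp hnN
      nlinarith
    have hloT : ((n : ℝ) - 1) * Ts < T := by nlinarith
    have haA : |a| ≤ A := hbound _ hlo0 hloT
    have hbA : |b| ≤ A := hbound _ (by positivity) hhiT
    have hlohi : ((n : ℝ) - 1) * Ts ≤ (n : ℝ) * Ts := by nlinarith
    have hcont : ContinuousOn q (Set.Icc (((n : ℝ) - 1) * Ts) ((n : ℝ) * Ts)) :=
      hqc.continuousOn
    -- produce level x strictly between a and b, with x = (2*m+1)*lam, and t
    have main : ∃ m : ℤ, ∃ t : ℝ,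
        |(2 * (m : ℝ) + 1) * lam| < A ∧ t ∈ Z m ∧
        ((n : ℝ) - 1) * Ts < t ∧ t < (n : ℝ) * Ts := by
      rcases lt_or_gt_of_ne hbin with hlt | hlt
      · -- bin a < bin b : level j := bin b
        set j := ⌊(b + lam) / (2 * lam)⌋ with hj
        set x := (2 * (j : ℝ) - 1) * lam with hx
        have hax : a < x := by
          have h1 : (a + lam) / (2 * lam) < (j : ℝ) := by
            apply Int.floor_lt.mp
            omega
          have h2 : a + lam < 2 * lam * j := by
            rw [div_lt_iff₀ (by positivity)] at h1
            linarith
          rw [hx]; nlinarith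
        have hxb : x < b := by
          have h1 : (j : ℝ) ≤ (b + lam) / (2 * lam) := Int.floor_le _
          have h2 : 2 * lam * j ≤ b + lam := by
            rw [le_div_iff₀ (by positivity)] at h1
            linarith
          have hxe : x ≤ b := by rw [hx]; nlinarith
          rcases lt_or_eq_of_le hxe with h | h
          · exact h
          · exfalso
            apply hnd n hnN (j - 1)
            rw [← hb, ← h, hx]
            push_cast
            ring
        obtain ⟨t, ht, hqt⟩ := intermediate_value_Ioo hlohi hcont ⟨hax, hxb⟩
        refine ⟨j - 1, t, ?_, ?_, ht.1, ht.2⟩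
        · have hxx : (2 * ((j : ℝ) - 1) + 1) * lam = x := by rw [hx]; ring
          push_cast [hxx]
          rcases le_or_gt 0 x with h | h
          · rw [abs_of_nonneg h]
            calc x < b := hxb
              _ ≤ |b| := le_abs_self b
              _ ≤ A := hbA
          · rw [abs_of_neg h]
            calc -x < -a := by linarith
              _ ≤ |a| := neg_le_abs a
              _ ≤ A := haA
        · apply hZmem (j - 1) t (le_trans hlo0 (le_of_lt ht.1)) (lt_trans ht.2 hhiT)
          rw [hqt]
          push_cast
          rw [hx]
          ring
      · -- bin b < bin a : level j := bin a
        set j := ⌊(a + lam) / (2 * lam)⌋ with hj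
        set x := (2 * (j : ℝ) - 1) * lam with hx
        have hbx : b < x := by
          have h1 : (b + lam) / (2 * lam) < (j : ℝ) := by
            apply Int.floor_lt.mp
            omega
          have h2 : b + lam < 2 * lam * j := by
            rw [div_lt_iff₀ (by positivity)] at h1
            linarith
          rw [hx]; nlinarith
        have hxa : x < a := by
          have h1 : (j : ℝ) ≤ (a + lam) / (2 * lam) := Int.floor_le _
          have h2 : 2 * lam * j ≤ a + lam := by
            rw [le_div_iff₀ (by positivity)] at h1
            linarith
          have hxe : x ≤ a := by rw [hx]; nlinarith
          rcases lt_or_eq_of_le hxe with h | h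
          · exact h
          · exfalso
            apply hnd (n - 1) hn1N (j - 1)
            rw [hcast, ← ha, ← h, hx]
            push_cast
            ring
        obtain ⟨t, ht, hqt⟩ := intermediate_value_Ioo' hlohi hcont ⟨hbx, hxa⟩
        refine ⟨j - 1, t, ?_, ?_, ht.1, ht.2⟩
        · have hxx : (2 * ((j : ℝ) - 1) + 1) * lam = x := by rw [hx]; ring
          push_cast [hxx]
          rcases le_or_gt 0 x with h | h
          · rw [abs_of_nonneg h]
            calc x < a := hxa
              _ ≤ |a| := le_abs_self a
              _ ≤ A := haA
          · rw [abs_of_neg h]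
            calc -x < -b := by linarith
              _ ≤ |b| := neg_le_abs b
              _ ≤ A := hbA
        · apply hZmem (j - 1) t (le_trans hlo0 (le_of_lt ht.1)) (lt_trans ht.2 hhiT)
          rw [hqt]
          push_cast
          rw [hx]
          ring
    obtain ⟨m, t, habs, htZ, ht1, ht2⟩ := main
    refine ⟨(m, t), ?_, htZ, ht1, ht2⟩
    -- m range from |（2m+1)λ| < A
    rw [Finset.mem_Icc]
    have habs' : |2 * (m : ℝ) + 1| * lam < A := by
      rw [← abs_of_pos hlam, ← abs_mul]
      exact habs
    have hcast2 : |2 * (m : ℝ) + 1| = ((|2 * m + 1| : ℤ) : ℝ) := by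
      push_cast
      ring_nf
    set v : ℤ := |2 * m + 1| with hv
    have hvodd : ∃ w : ℤ, 0 ≤ w ∧ v = 2 * w + 1 := by
      rcases le_or_gt 0 m with h | h
      · exact ⟨m, h, by rw [hv, abs_of_nonneg (by omega : (0:ℤ) ≤ 2 * m + 1)]⟩
      · exact ⟨-m - 1, by omega, by
          rw [hv, abs_of_neg (by omega : (2 * m + 1 : ℤ) < 0)]; ring⟩
    obtain ⟨w, hw0, hwv⟩ := hvodd
    have hwM : w ≤ M := by
      rw [hM]
      apply Int.le_floor.mpr
      have : ((v : ℤ) : ℝ) * lam < A := by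
        rw [← hcast2]
        exact habs'
      rw [hwv] at this
      push_cast at this
      rw [le_div_iff₀ (by positivity)]
      nlinarith
    have h1 : 2 * m + 1 ≤ v := hv ▸ le_abs_self _
    have h2 : -v ≤ 2 * m + 1 := hv ▸ neg_abs_le _
    omega
  -- choose witnesses totally
  have key : ∀ n : ℕ, ∃ p : ℤ × ℝ, n ∈ S →
      (p.1 ∈ Finset.Icc (-(M + 1)) M ∧ p.2 ∈ Z p.1 ∧
       ((n : ℝ) - 1) * Ts < p.2 ∧ p.2 < (n : ℝ) * Ts) := by
    intro n
    by_cases hn : n ∈ S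
    · obtain ⟨p, hp⟩ := key0 n hn
      exact ⟨p, fun _ => hp⟩
    · exact ⟨(0, 0), fun h => absurd h hn⟩
  choose f hf using key
  -- target finset
  set B : Finset (ℤ × ℝ) := (Finset.Icc (-(M + 1)) M).biUnion
      (fun m => (Z m).image (fun t => (m, t))) with hB
  have hmap : ∀ n ∈ S, f n ∈ B := by
    intro n hn
    obtain ⟨h1, h2, _, _⟩ := hf n hn
    rw [hB, Finset.mem_biUnion]
    exact ⟨(f n).1, h1, Finset.mem_image.mpr ⟨(f n).2, h2, rfl⟩⟩
  have hinjS : Set.InjOn f S := by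
    intro n₁ hn₁ n₂ hn₂ hfe
    simp only [Finset.mem_coe] at hn₁ hn₂
    obtain ⟨_, _, h13, h14⟩ := hf n₁ hn₁
    obtain ⟨_, _, h23, h24⟩ := hf n₂ hn₂
    by_contra hne
    have ht : (f n₁).2 = (f n₂).2 := by rw [hfe]
    rcases Nat.lt_or_ge n₁ n₂ with h | h
    · have hc : ((n₁ : ℝ)) ≤ (n₂ : ℝ) - 1 := by
        have : (n₁ : ℝ) + 1 ≤ n₂ := by exact_mod_cast h
        linarith
      have : (f n₁).2 < (f n₂).2 := by
        calc (f n₁).2 < (n₁ : ℝ) * Ts := h14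
          _ ≤ ((n₂ : ℝ) - 1) * Ts := by nlinarith
          _ < (f n₂).2 := h23
      rw [ht] at this
      exact lt_irrefl _ this
    · have h' : n₂ < n₁ := by omega
      have hc : ((n₂ : ℝ)) ≤ (n₁ : ℝ) - 1 := by
        have : (n₂ : ℝ) + 1 ≤ n₁ := by exact_mod_cast h'
        linarith
      have : (f n₂).2 < (f n₁).2 := by
        calc (f n₂).2 < (n₂ : ℝ) * Ts := h24
          _ ≤ ((n₁ : ℝ) - 1) * Ts := by nlinarith
          _ < (f n₁).2 := h13
      rw [ht] at this
      exact lt_irrefl _ this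
  have hcard : S.card ≤ B.card := Finset.card_le_card_of_injOn f hmap hinjS
  have hBcard : B.card ≤ (2 * M + 2).toNat * (2 * K) := by
    rw [hB]
    calc ((Finset.Icc (-(M + 1)) M).biUnion
        (fun m => (Z m).image (fun t => (m, t)))).card
        ≤ ∑ m ∈ Finset.Icc (-(M + 1)) M, ((Z m).image (fun t => (m, t))).card :=
          Finset.card_biUnion_le
      _ ≤ ∑ m ∈ Finset.Icc (-(M + 1)) M, 2 * K := by
          apply Finset.sum_le_sum
          intro m _
          exact le_trans (Finset.card_image_le) (hZcard m)
      _ = (Finset.Icc (-(M + 1)) M).card * (2 * K) := by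
          rw [Finset.sum_const, smul_eq_mul]
      _ = (2 * M + 2).toNat * (2 * K) := by
          rw [Int.card_Icc]
          congr 1
          omega
  have : (L : ℤ) ≤ ((2 * M + 2).toNat : ℤ) * (2 * K) := by
    rw [hL]
    exact_mod_cast le_trans hcard hBcard
  have htn : ((2 * M + 2).toNat : ℤ) = 2 * M + 2 := Int.toNat_of_nonneg (by omega)
  rw [htn] at this
  calc (L : ℤ) ≤ (2 * M + 2) * (2 * K) := this
    _ = 4 * K + 4 * K * M := by ring
end

section
/- Let N and M be positive integers with M ≤ N, let k₀ ∈ ℤ, and let n₁ < n₂ < … < n_M be distinct integers in {0, 1, …, N−1}. Then the M × M complex matrix with entries A_{j,l} = exp(−2πi·(k₀ + j)·n_l / N), for j ∈ {0, …, M−1} and l ∈ {1, …, M}, is invertible. -/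
open Matrix in
lemma exp_node_injective (N : ℕ) (hN : 0 < N) (a b : ℤ)
    (ha : a ∈ Set.Ico (0 : ℤ) (N : ℤ)) (hb : b ∈ Set.Ico (0 : ℤ) (N : ℤ))
    (h : Complex.exp (-(2 * Real.pi * Complex.I * (a : ℂ)) / N)
       = Complex.exp (-(2 * Real.pi * Complex.I * (b : ℂ)) / N)) : a = b := by
  have hNC : (N : ℂ) ≠ 0 := by exact_mod_cast hN.ne'
  rw [Complex.exp_eq_exp_iff_exists_int] at h
  obtain ⟨k, hk⟩ := h
  have ht : (2 * Real.pi * Complex.I : ℂ) ≠ 0 := by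
    simpa [mul_comm] using Complex.two_pi_I_ne_zero
  have key : (a : ℂ) = (b : ℂ) - (k : ℂ) * N := by
    have hk' := hk
    field_simp at hk'
    have h2 : ((2 * Real.pi * Complex.I : ℂ) * (N : ℂ)) * (a : ℂ)
        = ((2 * Real.pi * Complex.I : ℂ) * (N : ℂ)) * ((b : ℂ) - (k : ℂ) * N) := by
      linear_combination (-(2 * Real.pi * Complex.I * (N : ℂ))) * hk'
    exact mul_left_cancel₀ (mul_ne_zero ht hNC) h2
  have hz : a = b - k * N := by exact_mod_cast key
  have hNpos : (0 : ℤ) < (N : ℤ) := by exact_mod_cast hN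
  have hk0 : k = 0 := by
    rcases ha with ⟨ha0, haN⟩
    rcases hb with ⟨hb0, hbN⟩
    rcases lt_trichotomy k 0 with hlt | heq | hgt
    · exfalso; nlinarith
    · exact heq
    · exfalso; nlinarith
  rw [hk0] at hz; simpa using hz

open Matrix in
/-- Any `M × M` submatrix of the `M × N` partial DFT matrix, obtained by
selecting `M` distinct columns `n₁ < n₂ < … < n_M` in `{0, …, N−1}` of the
matrix with rows indexed by `M` consecutive DFT frequencies `k₀, …, k₀+M−1`,
is invertible. -/
theorem stmt_7 (N M : ℕ) (hN : 0 < N) (hM : 0 < M) (hMN : M ≤ N) (k₀ : ℤ)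
    (nn : Fin M → ℤ) (hmono : StrictMono nn)
    (hrange : ∀ l : Fin M, nn l ∈ Set.Ico (0 : ℤ) (N : ℤ)) :
    IsUnit (Matrix.of fun j l : Fin M =>
      Complex.exp (-(2 * Real.pi * Complex.I * ((k₀ : ℂ) + (j : ℕ)) * (nn l : ℂ)) / (N : ℂ))) := by
  have hNC : (N : ℂ) ≠ 0 := by exact_mod_cast hN.ne'
  set x : Fin M → ℂ := fun l => Complex.exp (-(2 * Real.pi * Complex.I * (nn l : ℂ)) / N) with hx
  set c : Fin M → ℂ := fun l =>
    Complex.exp (-(2 * Real.pi * Complex.I * (k₀ : ℂ) * (nn l : ℂ)) / N) with hc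
  have hA : (Matrix.of fun j l : Fin M =>
      Complex.exp (-(2 * Real.pi * Complex.I * ((k₀ : ℂ) + (j : ℕ)) * (nn l : ℂ)) / (N : ℂ)))
      = (Matrix.vandermonde x)ᵀ * Matrix.diagonal c := by
    ext j l
    rw [Matrix.mul_diagonal, Matrix.transpose_apply, Matrix.vandermonde]
    simp only [Matrix.of_apply, hx, hc]
    rw [← Complex.exp_nat_mul, ← Complex.exp_add]
    congr 1
    field_simp
    ring
  rw [hA]
  apply IsUnit.mul
  · rw [Matrix.isUnit_iff_isUnit_det, Matrix.det_transpose, Matrix.det_vandermonde,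
      isUnit_iff_ne_zero]
    rw [Finset.prod_ne_zero_iff]
    intro i _
    rw [Finset.prod_ne_zero_iff]
    intro j hj
    rw [sub_ne_zero]
    intro hxy
    have : nn j = nn i := exp_node_injective N hN _ _ (hrange j) (hrange i) hxy
    have hij : i < j := Finset.mem_Ioi.mp hj
    exact absurd (hmono.injective this) hij.ne'
  · rw [Matrix.isUnit_iff_isUnit_det, Matrix.det_diagonal, isUnit_iff_ne_zero]
    rw [Finset.prod_ne_zero_iff]
    intro l _
    exact Complex.exp_ne_zero _
end

section
/- Let N and M be positive integers with M ≤ N and k₀ ∈ ℤ, and let V be the M × N complex matrix with entries V_{j,n} = exp(−2πi·(k₀ + j)·n / N) for j ∈ {0,…,M−1}, n ∈ {0,…,N−1}. If x, y ∈ ℂ^N satisfy V·x = V·y and the total number of nonzero entries of x plus the number of nonzero entries of y is at most M, then x = y. In particular, an L-sparse vector with L < (M+1)/2 is uniquely determined by its M consecutive DFT-type measurements. -/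
/-- Spark-based uniqueness for the partial DFT matrix `V` with entries
`V_{j,n} = e^{−2πi(k₀+j)n/N}`: if `V·x = V·y` and the total number of nonzero
entries of `x` and `y` together is at most `M`, then `x = y`. In particular an
`L`-sparse vector with `L < (M+1)/2` is uniquely determined by its `M`
consecutive DFT-type measurements. -/
theorem stmt_8 (N M : ℕ) (hN : 0 < N) (hM : 0 < M) (hMN : M ≤ N) (k₀ : ℤ)
    (V : Matrix (Fin M) (Fin N) ℂ)
    (hV : ∀ (j : Fin M) (n : Fin N),
      V j n = Complex.exp (-(2 * Real.pi * Complex.I * ((k₀ : ℂ) + (j : ℕ)) * (n : ℕ)) / (N : ℂ)))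
    (x y : Fin N → ℂ) (hxy : V.mulVec x = V.mulVec y)
    (hsparse : (Finset.univ.filter fun n : Fin N => x n ≠ 0).card +
        (Finset.univ.filter fun n : Fin N => y n ≠ 0).card ≤ M) :
    x = y := by
  classical
  set z : Fin N → ℂ := x - y with hzdef
  set S : Finset (Fin N) := Finset.univ.filter (fun n => z n ≠ 0) with hSdef
  have hNC : (N : ℂ) ≠ 0 := Nat.cast_ne_zero.mpr hN.ne'
  -- the support of z is small
  have hsub : S ⊆ (Finset.univ.filter fun n : Fin N => x n ≠ 0) ∪
      (Finset.univ.filter fun n : Fin N => y n ≠ 0) := by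
    intro n hn
    simp only [hSdef, Finset.mem_filter, Finset.mem_union, Finset.mem_univ, true_and] at hn ⊢
    by_contra h
    push_neg at h
    exact hn (by simp [hzdef, h.1, h.2])
  have hs : S.card ≤ M :=
    le_trans (le_trans (Finset.card_le_card hsub) (Finset.card_union_le _ _)) hsparse
  set s : ℕ := S.card with hscard
  -- V z = 0
  have hVz : V.mulVec z = 0 := by
    rw [hzdef, Matrix.mulVec_sub, hxy, sub_self]
  -- the enumeration of the support
  set e : Fin s ↪o Fin N := S.orderEmbOfFin rfl with hedef
  have heS : ∀ i, e i ∈ S := fun i => S.orderEmbOfFin_mem rfl i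
  have hSmap : S = Finset.univ.map e.toEmbedding := by
    ext a
    simp only [Finset.mem_map, Finset.mem_univ, true_and]
    constructor
    · intro ha
      have : a ∈ Set.range e := by
        rw [Finset.range_orderEmbOfFin]; exact ha
      obtain ⟨i, hi⟩ := this
      exact ⟨i, hi⟩
    · rintro ⟨i, rfl⟩; exact heS i
  set w : Fin s → ℂ := fun i => z (e i) with hwdef
  -- roots
  set ω : ℂ := Complex.exp (-(2 * Real.pi * Complex.I) / (N : ℂ)) with hωdef
  have hωprim : IsPrimitiveRoot ω N := by
    have h1 := Complex.isPrimitiveRoot_exp N hN.ne'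
    have : ω = (Complex.exp (2 * Real.pi * Complex.I / (N : ℂ)))⁻¹ := by
      rw [hωdef, ← Complex.exp_neg]
      ring_nf
    rw [this]
    exact h1.inv
  set v : Fin s → ℂ := fun i => ω ^ ((e i : Fin N) : ℕ) with hvdef
  have hvinj : Function.Injective v := by
    intro i i' h
    have := hωprim.pow_inj (e i).isLt (e i').isLt h
    exact e.injective (Fin.ext this)
  set c : Fin s → ℂ := fun i =>
    Complex.exp (-(2 * Real.pi * Complex.I * (k₀ : ℂ) * ((e i : Fin N) : ℕ)) / (N : ℂ)) with hcdef
  -- entry formula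
  have hentry : ∀ (j : Fin M) (i : Fin s),
      V j (e i) = v i ^ (j : ℕ) * c i := by
    intro j i
    rw [hV, hvdef, hcdef, hωdef]
    beta_reduce
    rw [← Complex.exp_nat_mul, ← Complex.exp_nat_mul, ← Complex.exp_add]
    congr 1
    field_simp
    ring
  -- the square submatrix
  set B : Matrix (Fin s) (Fin s) ℂ := fun j i => V (Fin.castLE hs j) (e i) with hBdef
  have hBfac : B = Matrix.transpose (Matrix.vandermonde v) * Matrix.diagonal c := by
    ext j i
    rw [Matrix.mul_diagonal, Matrix.transpose_apply, Matrix.vandermonde_apply, hBdef]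
    simpa using hentry (Fin.castLE hs j) i
  have hdet : B.det ≠ 0 := by
    rw [hBfac, Matrix.det_mul, Matrix.det_transpose, Matrix.det_diagonal,
      Matrix.det_vandermonde]
    apply mul_ne_zero
    · rw [Finset.prod_ne_zero_iff]
      intro i _
      rw [Finset.prod_ne_zero_iff]
      intro j hj
      have hij : j ≠ i := (Finset.mem_Ioi.mp hj).ne'
      exact sub_ne_zero.mpr fun h => hij (hvinj h)
    · rw [Finset.prod_ne_zero_iff]
      intro i _
      exact Complex.exp_ne_zero _
  -- B w = 0
  have hBw : B.mulVec w = 0 := by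
    funext j
    have h0 : (V.mulVec z) (Fin.castLE hs j) = 0 := by rw [hVz]; rfl
    rw [Matrix.mulVec] at h0
    have hsum : ∑ n : Fin N, V (Fin.castLE hs j) n * z n
        = ∑ n ∈ S, V (Fin.castLE hs j) n * z n := by
      refine (Finset.sum_subset S.subset_univ ?_).symm
      intro n _ hn
      have : z n = 0 := by
        by_contra h
        exact hn (by simp [hSdef, h])
      rw [this, mul_zero]
    have hre : ∑ n ∈ S, V (Fin.castLE hs j) n * z n
        = ∑ i : Fin s, V (Fin.castLE hs j) (e i) * z (e i) := by
      rw [hSmap, Finset.sum_map]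
      rfl
    have : ∑ i : Fin s, V (Fin.castLE hs j) (e i) * z (e i) = 0 := by
      rw [← hre, ← hsum]
      simpa [dotProduct] using h0
    simpa [Matrix.mulVec, dotProduct, hBdef, hwdef] using this
  -- hence w = 0
  have hw0 : w = 0 := by
    have h1 : B⁻¹.mulVec (B.mulVec w) = w := by
      rw [Matrix.mulVec_mulVec, Matrix.nonsing_inv_mul B (isUnit_iff_ne_zero.mpr hdet),
        Matrix.one_mulVec]
    rw [hBw, Matrix.mulVec_zero] at h1
    exact h1.symm
  -- hence z = 0
  have hz0 : ∀ n, z n = 0 := by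
    intro n
    by_contra h
    have hn : n ∈ S := by simp [hSdef, h]
    have : n ∈ Set.range e := by rw [Finset.range_orderEmbOfFin]; exact hn
    obtain ⟨i, hi⟩ := this
    have : w i = 0 := by rw [hw0]; rfl
    rw [hwdef] at this
    exact h (by rw [← hi]; exact this)
  funext n
  have := hz0 n
  rw [hzdef] at this
  simpa [sub_eq_zero] using this
end
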